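/- arXiv:1603.09224 — 3 statements merged into one kernel-verified Lean document; each statement's English description precedes it below -/
import Mathlib

section
/- There is no smooth function f : ℝ → ℝ and real numbers a, b, c with b < c such that: f(b) = f(c) = a; f(x) ≠ a for all x ∈ (b,c); there exist minimal positive integers m_b and m_c with f^{(m_b)}(b) ≠ 0 and f^{(m_c)}(c) ≠ 0; both m_b and m_c are even; and f^{(m_b)}(b)·f^{(m_c)}(c) < 0. -/
open Set Filter Topology Nat

private lemma itdw_eq {f : ℝ → ℝ} (hf : ContDiff ℝ (⊤ : ℕ∞) f) {s : Set ℝ}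
    (hs : UniqueDiffOn ℝ s) {x : ℝ} (hx : x ∈ s) (n : ℕ) :
    iteratedDerivWithin n f s x = iteratedDeriv n f x := by
  have h : HasFTaylorSeriesUpToOn (n : ℕ∞) f (ftaylorSeriesWithin ℝ f Set.univ) s :=
    (((hf.of_le (by exact_mod_cast le_top)).contDiffOn (s := Set.univ)).ftaylorSeriesWithin
      uniqueDiffOn_univ).mono (Set.subset_univ s)
  have h2 := h.eq_iteratedFDerivWithin_of_uniqueDiffOn le_rfl hs hx
  rw [iteratedDerivWithin_eq_iteratedFDerivWithin, iteratedDeriv_eq_iteratedFDeriv, ← h2,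
    ftaylorSeriesWithin_univ]
  rfl

private lemma right_sign {f : ℝ → ℝ} {a b : ℝ} {m : ℕ} (hf : ContDiff ℝ (⊤ : ℕ∞) f)
    (hfb : f b = a) (hm : 0 < m) (h0 : iteratedDeriv m f b ≠ 0)
    (hlow : ∀ k, 0 < k → k < m → iteratedDeriv k f b = 0) :
    ∀ᶠ x in 𝓝[>] b, 0 < (f x - a) * iteratedDeriv m f b := by
  set D := iteratedDeriv m f b with hD
  have hcont : Continuous (iteratedDeriv m f) := hf.continuous_iteratedDeriv m (by exact_mod_cast le_top)
  have hball : ∀ᶠ y in 𝓝 b, 0 < iteratedDeriv m f y * D := by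
    have hc : ContinuousAt (fun y => iteratedDeriv m f y * D) b :=
      (hcont.mul continuous_const).continuousAt
    have hpos : (0 : ℝ) < iteratedDeriv m f b * D := by
      rw [← hD]; exact mul_self_pos.mpr h0
    exact continuousAt_const.eventually_lt hc hpos
  rcases Metric.eventually_nhds_iff.mp hball with ⟨δ, hδ, hball⟩
  filter_upwards [Ioo_mem_nhdsGT_of_mem
    (show b ∈ Set.Ico b (b + δ) from ⟨le_refl b, by linarith⟩)] with x hx
  obtain ⟨hbx, hxδ⟩ := hx
  have husc : UniqueDiffOn ℝ (Set.Icc b x) := uniqueDiffOn_Icc hbx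
  have hcd : ContDiffOn ℝ (m - 1 : ℕ) f (Set.Icc b x) := (hf.of_le (by exact WithTop.coe_le_coe.mpr (le_top : ((m - 1 : ℕ) : ℕ∞) ≤ ⊤))).contDiffOn
  have hdiff : DifferentiableOn ℝ (iteratedDerivWithin (m - 1) f (Set.Icc b x))
      (Set.Ioo b x) := by
    apply DifferentiableOn.congr
      ((hf.differentiable_iteratedDeriv (m - 1)
        (by exact WithTop.coe_lt_coe.mpr (ENat.coe_lt_top (m - 1)))).differentiableOn)
    intro y hy
    exact itdw_eq hf husc (Set.Ioo_subset_Icc_self hy) (m - 1)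
  obtain ⟨ξ, hξ, heq⟩ := taylor_mean_remainder_lagrange hbx.ne
    (by rwa [Set.uIcc_of_le hbx.le]) (by rwa [Set.uIcc_of_le hbx.le, Set.uIoo_of_le hbx.le])
  rw [Set.uIcc_of_le hbx.le] at heq
  rw [Set.uIoo_of_le hbx.le] at hξ
  have hpoly : taylorWithinEval f (m - 1) (Set.Icc b x) b x = a := by
    rw [taylor_within_apply]
    have hterm : ∀ k ∈ Finset.range (m - 1 + 1),
        ((k ! : ℝ)⁻¹ * (x - b) ^ k) • iteratedDerivWithin k f (Set.Icc b x) b =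
          if k = 0 then a else 0 := by
      intro k hk
      rw [itdw_eq hf husc (Set.left_mem_Icc.mpr hbx.le) k]
      rcases Nat.eq_zero_or_pos k with rfl | hkpos
      · simp [hfb]
      · have hkm : k < m := by have := Finset.mem_range.mp hk; omega
        rw [if_neg hkpos.ne', hlow k hkpos hkm, smul_zero]
    rw [Finset.sum_congr rfl hterm]
    simp
  rw [hpoly] at heq
  have hmm : m - 1 + 1 = m := Nat.succ_pred_eq_of_pos hm
  rw [hmm] at heq
  rw [itdw_eq hf husc (Set.Ioo_subset_Icc_self hξ) m] at heq
  have hξD : 0 < iteratedDeriv m f ξ * D := by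
    apply hball
    rw [Real.dist_eq, abs_of_pos (by linarith [hξ.1])]
    linarith [hξ.2]
  have hpow : (0 : ℝ) < (x - b) ^ m := pow_pos (by linarith) m
  have hfact : (0 : ℝ) < (m ! : ℝ) := by positivity
  rw [heq]
  calc (0:ℝ) < (iteratedDeriv m f ξ * D) * ((x - b) ^ m / m !) := by positivity
    _ = iteratedDeriv m f ξ * (x - b) ^ m / ↑m ! * D := by ring

theorem stmt_7 : ¬ ∃ (f : ℝ → ℝ) (a b c : ℝ) (mb mc : ℕ),
    ContDiff ℝ (⊤ : ℕ∞) f ∧ b < c ∧ f b = a ∧ f c = a ∧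
    (∀ x ∈ Set.Ioo b c, f x ≠ a) ∧
    0 < mb ∧ 0 < mc ∧
    iteratedDeriv mb f b ≠ 0 ∧ (∀ k, 0 < k → k < mb → iteratedDeriv k f b = 0) ∧
    iteratedDeriv mc f c ≠ 0 ∧ (∀ k, 0 < k → k < mc → iteratedDeriv k f c = 0) ∧
    Even mb ∧ Even mc ∧
    iteratedDeriv mb f b * iteratedDeriv mc f c < 0 := by
  rintro ⟨f, a, b, c, mb, mc, hf, hbc, hfb, hfc, hne, hmb, hmc, hDb, hlowb, hDc, hlowc,
    hEb, hEc, hsign⟩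
  set Db := iteratedDeriv mb f b
  set Dc := iteratedDeriv mc f c
  have h1 := right_sign hf hfb hmb hDb hlowb
  set g : ℝ → ℝ := fun x => f (-x) with hg
  have hgc : ContDiff ℝ (⊤ : ℕ∞) g := hf.comp contDiff_neg
  have hgval : g (-c) = a := by simp [hg, hfc]
  have hgder : ∀ k : ℕ, iteratedDeriv k g (-c) = (-1 : ℝ) ^ k * iteratedDeriv k f c := by
    intro k
    rw [hg, iteratedDeriv_comp_neg, neg_neg, smul_eq_mul]
  have hglow : ∀ k, 0 < k → k < mc → iteratedDeriv k g (-c) = 0 := by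
    intro k hk hkm
    rw [hgder, hlowc k hk hkm, mul_zero]
  have hgD : iteratedDeriv mc g (-c) = Dc := by
    rw [hgder, hEc.neg_one_pow, one_mul]
  have h2 := right_sign hgc hgval hmc (hgD ▸ hDc) hglow
  rw [hgD] at h2
  have h1' : ∀ᶠ x in 𝓝[>] b, x ∈ Set.Ioo b c :=
    Ioo_mem_nhdsGT_of_mem (Set.left_mem_Ico.mpr hbc)
  have h2' : ∀ᶠ y in 𝓝[>] (-c), y ∈ Set.Ioo (-c) (-b) :=
    Ioo_mem_nhdsGT_of_mem (Set.left_mem_Ico.mpr (by linarith))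
  obtain ⟨x₁, hx₁s, hx₁⟩ := (h1.and h1').exists
  obtain ⟨y, hys, hy⟩ := (h2.and h2').exists
  set x₂ := -y with hx₂
  have hx₂mem : x₂ ∈ Set.Ioo b c :=
    ⟨by rw [hx₂]; linarith [hy.2], by rw [hx₂]; linarith [hy.1]⟩
  have hy2 : 0 < (f x₂ - a) * Dc := by simpa [g] using hys
  have hPQ : (f x₁ - a) * (f x₂ - a) < 0 := by nlinarith [mul_pos hx₁s hy2]
  have hcf : ContinuousOn f (Set.uIcc x₁ x₂) := hf.continuous.continuousOn
  have hmem : a ∈ Set.uIcc (f x₁) (f x₂) := by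
    rcases mul_neg_iff.mp hPQ with ⟨h₁, h₂⟩ | ⟨h₁, h₂⟩
    · exact Set.mem_uIcc.mpr (Or.inr ⟨by linarith, by linarith⟩)
    · exact Set.mem_uIcc.mpr (Or.inl ⟨by linarith, by linarith⟩)
  obtain ⟨z, hz, hfz⟩ := intermediate_value_uIcc hcf hmem
  have hzmem : z ∈ Set.Ioo b c := by
    have hsub : Set.uIcc x₁ x₂ ⊆ Set.Ioo b c :=
      Set.OrdConnected.uIcc_subset Set.ordConnected_Ioo hx₁ hx₂mem
    exact hsub hz
  exact hne z hzmem hfz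
end

section
/- Let U ⊆ ℝ be an open interval and f : U → ℝ a smooth function. Suppose that for every u ∈ U there exists a positive integer m with f^{(m)}(u) ≠ 0, and that the smallest such m (call it m_u) is odd with f^{(m_u)}(u) > 0. Then f is strictly increasing on U. -/
lemma iterDW_open {U : Set ℝ} (hU : IsOpen U) (f : ℝ → ℝ) (n : ℕ) {u : ℝ} (hu : u ∈ U) :
    iteratedDerivWithin n f U u = iteratedDeriv n f u := by
  simp [iteratedDerivWithin_eq_iteratedFDerivWithin, iteratedDeriv_eq_iteratedFDeriv,
    iteratedFDerivWithin_of_isOpen n hU hu]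

lemma iterD_const {c : ℝ} {n : ℕ} (hn : n ≠ 0) (x : ℝ) :
    iteratedDeriv n (fun _ => c) x = 0 := by
  rw [iteratedDeriv_eq_iteratedFDeriv, iteratedFDeriv_const_of_ne hn]
  rfl

theorem stmt_8 (U : Set ℝ) (hU : IsOpen U) (hconn : U.OrdConnected)
    (f : ℝ → ℝ) (hf : ContDiffOn ℝ (⊤ : ℕ∞) f U)
    (h : ∀ u ∈ U, ∃ m : ℕ, 0 < m ∧
      (∀ k, 0 < k → k < m → iteratedDerivWithin k f U u = 0) ∧
      Odd m ∧ 0 < iteratedDerivWithin m f U u) :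
    StrictMonoOn f U := by
  have hconv : Convex ℝ U := convex_iff_ordConnected.mpr hconn
  -- derivative is nonneg on U
  have hderiv : ∀ u ∈ U, 0 ≤ deriv f u := by
    intro u hu
    obtain ⟨m, hm, hlt, _, hpos⟩ := h u hu
    rcases eq_or_lt_of_le (show 1 ≤ m from hm) with h1 | h1
    · rw [← h1] at hpos
      rw [iterDW_open hU f 1 hu, iteratedDeriv_one] at hpos
      exact hpos.le
    · have := hlt 1 one_pos h1
      rw [iterDW_open hU f 1 hu, iteratedDeriv_one] at this
      exact this.ge
  have hcont : ContinuousOn f U := hf.continuousOn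
  have hmono : MonotoneOn f U := by
    apply monotoneOn_of_deriv_nonneg hconv hcont
    · intro x hx
      rw [hU.interior_eq] at hx
      exact ((hf.contDiffAt (hU.mem_nhds hx)).differentiableAt (by simp)).differentiableWithinAt
    · intro x hx; exact hderiv x (hU.interior_eq ▸ hx)
  intro a ha b hb hab
  rcases lt_or_eq_of_le (hmono ha hb hab.le) with hlt | heq
  · exact hlt
  -- f a = f b : derive a contradiction
  exfalso
  have hIcc : Set.Icc a b ⊆ U := hconn.out ha hb
  have hconst : ∀ x ∈ Set.Icc a b, f x = f a := by
    intro x hx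
    have h1 := hmono ha (hIcc hx) hx.1
    have h2 := hmono (hIcc hx) hb hx.2
    linarith [heq ▸ h2]
  set u := (a + b) / 2 with hu_def
  have hu_mem : u ∈ Set.Ioo a b := ⟨by linarith, by linarith⟩
  have huU : u ∈ U := hIcc (Set.Ioo_subset_Icc_self hu_mem)
  obtain ⟨m, hm, _, _, hpos⟩ := h u huU
  rw [iterDW_open hU f m huU] at hpos
  have heq' : iteratedDeriv m f u = iteratedDeriv m (fun _ => f a) u := by
    apply Filter.EventuallyEq.iteratedDeriv_eq
    filter_upwards [Ioo_mem_nhds hu_mem.1 hu_mem.2] with x hx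
    exact hconst x (Set.Ioo_subset_Icc_self hx)
  rw [heq', iterD_const hm.ne'] at hpos
  exact lt_irrefl 0 hpos
end

section
/- Let f : ℝ → ℝ be a smooth function with no flat point, i.e., for every u ∈ ℝ there is some positive integer m with f^{(m)}(u) ≠ 0. Let a < b be reals with f(a) < y < f(b). Then there exists c ∈ (a,b) such that f(c) = y and such that the smallest positive integer m with f^{(m)}(c) ≠ 0 is odd. -/
open Set Filter Topology

/-- Iterated derivatives within a uniquely differentiable set agree with global ones
for smooth functions. -/
lemma my_idw {f : ℝ → ℝ} (hf : ContDiff ℝ (⊤ : ℕ∞) f) {s : Set ℝ} (hs : UniqueDiffOn ℝ s)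
    {x : ℝ} (hx : x ∈ s) (k : ℕ) :
    iteratedDerivWithin k f s x = iteratedDeriv k f x := by
  have h : HasFTaylorSeriesUpToOn (⊤ : ℕ∞) f (ftaylorSeriesWithin ℝ f univ) s :=
    ((hf.contDiffOn (s := univ)).ftaylorSeriesWithin uniqueDiffOn_univ).mono (subset_univ s)
  have h2 := h.eq_iteratedFDerivWithin_of_uniqueDiffOn (m := k) (by exact_mod_cast (le_top : (k : ℕ∞) ≤ ⊤)) hs hx
  rw [iteratedDerivWithin, iteratedDeriv, ← h2]
  have : ftaylorSeriesWithin ℝ f univ x k = iteratedFDerivWithin ℝ k f univ x := rfl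
  rw [this, iteratedFDerivWithin_univ]

/-- Key lemma: if the first nonvanishing derivative at `c` (of order `m ≥ 1`) is positive,
then `f x > f c` just to the right of `c`. -/
lemma my_key {f : ℝ → ℝ} (hf : ContDiff ℝ (⊤ : ℕ∞) f) (c : ℝ) (m : ℕ) (hm : 0 < m)
    (hpos : 0 < iteratedDeriv m f c)
    (hk : ∀ k, 0 < k → k < m → iteratedDeriv k f c = 0) :
    ∃ δ > 0, ∀ x, c < x → x < c + δ → f c < f x := by
  have hcont : Continuous (iteratedDeriv m f) := hf.continuous_iteratedDeriv m (by exact_mod_cast le_top)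
  have hopen : IsOpen {t : ℝ | 0 < iteratedDeriv m f t} := isOpen_lt continuous_const hcont
  obtain ⟨δ, hδ, hball⟩ := Metric.isOpen_iff.1 hopen c hpos
  refine ⟨δ, hδ, fun x hcx hxδ => ?_⟩
  have hux : UniqueDiffOn ℝ (Icc c x) := uniqueDiffOn_Icc hcx
  have hcd : ContDiffOn ℝ (m - 1 : ℕ) f (Icc c x) := (hf.of_le (WithTop.coe_le_coe.2 le_top)).contDiffOn
  have hdiff : DifferentiableOn ℝ (iteratedDerivWithin (m - 1) f (Icc c x)) (Ioo c x) := by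
    have hd : DifferentiableOn ℝ (iteratedDeriv (m - 1) f) (Ioo c x) :=
      (hf.differentiable_iteratedDeriv (m - 1)
        (WithTop.coe_lt_coe.2 (ENat.coe_lt_top (m - 1)))).differentiableOn
    exact hd.congr fun t ht => my_idw hf hux (Ioo_subset_Icc_self ht) (m - 1)
  have huI : uIcc c x = Icc c x := uIcc_of_le hcx.le
  have huO : uIoo c x = Ioo c x := uIoo_of_le hcx.le
  obtain ⟨ξ, hξ, heq⟩ := taylor_mean_remainder_lagrange hcx.ne (by rwa [huI]) (by rwa [huI, huO])
  rw [huI] at heq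
  rw [huO] at hξ
  have hm1 : m - 1 + 1 = m := Nat.succ_pred_eq_of_pos hm
  have htay : taylorWithinEval f (m - 1) (Icc c x) c x = f c := by
    rw [taylor_within_apply]
    rw [Finset.sum_eq_single 0]
    · simp
    · intro k hkmem hk0
      have hkm : k < m := by
        have := Finset.mem_range.1 hkmem
        omega
      rw [my_idw hf hux (left_mem_Icc.2 hcx.le) k, hk k (Nat.pos_of_ne_zero hk0) hkm]
      simp
    · intro h; simp at h
  have hξball : ξ ∈ Metric.ball c δ := by
    rw [Metric.mem_ball, Real.dist_eq, abs_of_pos (by linarith [hξ.1])]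
    linarith [hξ.2]
  have hξpos : 0 < iteratedDeriv m f ξ := hball hξball
  have hidw : iteratedDerivWithin (m - 1 + 1) f (Icc c x) ξ = iteratedDeriv m f ξ := by
    rw [hm1]; exact my_idw hf hux (Ioo_subset_Icc_self hξ) m
  rw [htay, hidw] at heq
  have hxc : 0 < (x - c) ^ (m - 1 + 1) := pow_pos (by linarith) _
  have hfac : (0 : ℝ) < ((m - 1 + 1).factorial : ℝ) := Nat.cast_pos.2 (Nat.factorial_pos _)
  have : 0 < f x - f c := by
    rw [heq]; positivity
  linarith

theorem stmt_10 (f : ℝ → ℝ) (hf : ContDiff ℝ (⊤ : ℕ∞) f)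
    (hnoflat : ∀ u : ℝ, ∃ m : ℕ, 0 < m ∧ iteratedDeriv m f u ≠ 0)
    (a b y : ℝ) (hab : a < b) (hy1 : f a < y) (hy2 : y < f b) :
    ∃ c ∈ Set.Ioo a b, f c = y ∧
      ∃ m : ℕ, 0 < m ∧ Odd m ∧ iteratedDeriv m f c ≠ 0 ∧
        ∀ k, 0 < k → k < m → iteratedDeriv k f c = 0 := by
  set S : Set ℝ := {x | x ∈ Icc a b ∧ y < f x} with hS
  have hSb : b ∈ S := ⟨⟨hab.le, le_refl b⟩, hy2⟩
  have hSne : S.Nonempty := ⟨b, hSb⟩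
  have hSbdd : BddBelow S := ⟨a, fun x hx => hx.1.1⟩
  set c := sInf S with hc
  have hca : a ≤ c := le_csInf hSne fun x hx => hx.1.1
  have hcb : c ≤ b := csInf_le hSbdd hSb
  have hfc_ge : y ≤ f c := by
    have hcl : c ∈ closure S := csInf_mem_closure hSne hSbdd
    have hclosed : IsClosed {x : ℝ | y ≤ f x} := isClosed_le continuous_const hf.continuous
    exact hclosed.closure_subset_iff.2 (fun x hx => hx.2.le) hcl
  have hac : a < c := lt_of_le_of_ne hca (fun h => by rw [← h] at hfc_ge; linarith)
  have hleft : ∀ x, a ≤ x → x < c → f x ≤ y := by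
    intro x hax hxc
    by_contra h
    push_neg at h
    exact absurd (csInf_le hSbdd ⟨⟨hax, hxc.le.trans hcb⟩, h⟩) (not_le.2 hxc)
  have hfc_le : f c ≤ y := by
    have htend : Tendsto f (𝓝[<] c) (𝓝 (f c)) :=
      (hf.continuous.continuousAt).continuousWithinAt.tendsto
    refine le_of_tendsto htend ?_
    filter_upwards [Ioo_mem_nhdsLT_of_mem (show c ∈ Ioc a c from ⟨hac, le_refl c⟩)] with x hx
    exact hleft x hx.1.le hx.2
  have hfc : f c = y := le_antisymm hfc_le hfc_ge
  have hcbb : c < b := lt_of_le_of_ne hcb (fun h => by rw [h] at hfc; linarith)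
  -- points of S accumulate at c from the right
  have hSnear : ∀ ε > (0 : ℝ), ∃ x ∈ S, c < x ∧ x < c + ε := by
    intro ε hε
    obtain ⟨x, hxS, hx⟩ := exists_lt_of_csInf_lt hSne (show sInf S < c + ε by linarith)
    have hcx : c ≤ x := csInf_le hSbdd hxS
    have hne : c ≠ x := by rintro rfl; exact absurd hxS.2 (by rw [hfc]; exact lt_irrefl y)
    exact ⟨x, hxS, lt_of_le_of_ne hcx hne, hx⟩
  -- minimal order m
  have hex : ∃ m : ℕ, 0 < m ∧ iteratedDeriv m f c ≠ 0 := hnoflat c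
  set m := Nat.find hex with hmdef
  obtain ⟨hm0, hmne⟩ := Nat.find_spec hex
  have hmin : ∀ k, 0 < k → k < m → iteratedDeriv k f c = 0 := by
    intro k hk hkm
    by_contra h
    exact absurd (Nat.find_le ⟨hk, h⟩) (not_le.2 hkm)
  -- the m-th derivative at c is positive
  have hpos : 0 < iteratedDeriv m f c := by
    rcases hmne.lt_or_gt with hneg | hpos
    · exfalso
      have hnegf : 0 < iteratedDeriv m (fun x => -f x) c := by
        rw [iteratedDeriv_fun_neg]; linarith
      have hknegf : ∀ k, 0 < k → k < m → iteratedDeriv k (fun x => -f x) c = 0 := by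
        intro k hk hkm; rw [iteratedDeriv_fun_neg, hmin k hk hkm, neg_zero]
      obtain ⟨δ, hδ, hδp⟩ := my_key hf.neg c m hm0 hnegf hknegf
      obtain ⟨x, hxS, hcx, hxδ⟩ := hSnear δ hδ
      have := hδp x hcx hxδ
      have : f x < f c := by linarith
      rw [hfc] at this
      linarith [hxS.2]
    · exact hpos
  -- m is odd
  have hodd : Odd m := by
    by_contra h
    have heven : Even m := Nat.not_odd_iff_even.1 h
    set g : ℝ → ℝ := fun t => f (2 * c + -t) with hg
    have hgsmooth : ContDiff ℝ (⊤ : ℕ∞) g :=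
      hf.comp ((contDiff_const (c := 2 * c)).add contDiff_id.neg)
    have hgd : ∀ n : ℕ, ∀ t : ℝ, iteratedDeriv n g t = (-1 : ℝ) ^ n * iteratedDeriv n f (2 * c + -t) := by
      intro n t
      have h1 := iteratedDeriv_comp_neg n (fun u => f (2 * c + u)) t
      have h2 := congrFun (iteratedDeriv_comp_const_add n f (2 * c)) (-t)
      simp only [hg]
      rw [h1, h2, smul_eq_mul]
    have hgc : g c = y := by simp only [hg]; rw [show 2 * c + -c = c by ring, hfc]
    have hgm : 0 < iteratedDeriv m g c := by
      rw [hgd m c, show 2 * c + -c = c by ring, heven.neg_one_pow, one_mul]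
      exact hpos
    have hgk : ∀ k, 0 < k → k < m → iteratedDeriv k g c = 0 := by
      intro k hk hkm
      rw [hgd k c, show 2 * c + -c = c by ring, hmin k hk hkm, mul_zero]
    obtain ⟨δ, hδ, hδp⟩ := my_key hgsmooth c m hm0 hgm hgk
    set δ' := min δ (c - a) with hδ'
    have hδ'pos : 0 < δ' := lt_min hδ (by linarith)
    set x := c + δ' / 2 with hx
    have hgx := hδp x (by simp [hx]; linarith) (by simp only [hx]; linarith [min_le_left δ (c - a)])
    rw [hgc] at hgx
    have h2cx : 2 * c + -x ∈ Ico a c := by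
      constructor
      · have : δ' ≤ c - a := min_le_right _ _
        simp only [hx]; linarith
      · simp only [hx]; linarith
    have := hleft (2 * c + -x) h2cx.1 h2cx.2
    simp only [hg] at hgx
    linarith
  exact ⟨c, ⟨hac, hcbb⟩, hfc, m, hm0, hodd, hmne, hmin⟩
end
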